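/- arXiv:2410.05828 — 3 statements merged into one kernel-verified Lean document; each statement's English description precedes it below -/
import Mathlib

section
/- Let M ≥ 1 be a natural number, ε ≥ 0 and H ≥ 0 real numbers, and v_1, …, v_M real numbers with 0 ≤ v_m ≤ H for every m. Then 1 − ∏_{m=1}^{M} (1 − ε·v_m) ≥ ε · ∑_{m=1}^{M} v_m − ∑_{m'=1}^{⌊M/2⌋} (ε·H·M)^{2m'}. -/
/-- Combined intermediate bound:
`1 - ∏ (1 - ε v_m) ≥ ε ∑ v_m - ∑_{m'=1}^{⌊M/2⌋} (ε H M)^{2m'}`. -/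
theorem combined_intermediate_bound (M : ℕ) (hM : 1 ≤ M) (ε H : ℝ)
    (hε : 0 ≤ ε) (hH : 0 ≤ H) (v : ℕ → ℝ)
    (hv : ∀ m ∈ Finset.Icc 1 M, 0 ≤ v m ∧ v m ≤ H) :
    1 - ∏ m ∈ Finset.Icc 1 M, (1 - ε * v m) ≥
      ε * ∑ m ∈ Finset.Icc 1 M, v m -
        ∑ m' ∈ Finset.Icc 1 (M / 2), (ε * H * (M : ℝ)) ^ (2 * m') := by
  classical
  set s := Finset.Icc 1 M with hs
  have hcard : s.card = M := by simp [hs]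
  set a : ℕ → ℝ := fun m => ε * v m with ha
  set E : ℕ → ℝ := fun k => ∑ S ∈ Finset.powersetCard k s, ∏ m ∈ S, a m with hEdef
  have ha0 : ∀ m ∈ s, 0 ≤ a m := fun m hm => mul_nonneg hε (hv m hm).1
  have haH : ∀ m ∈ s, a m ≤ ε * H := fun m hm =>
    mul_le_mul_of_nonneg_left (hv m hm).2 hε
  have hEnonneg : ∀ k, 0 ≤ E k := by
    intro k
    refine Finset.sum_nonneg fun S hS => Finset.prod_nonneg fun m hm => ?_
    exact ha0 m ((Finset.mem_powersetCard.1 hS).1 hm)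
  have hEbound : ∀ k, E k ≤ (ε * H * (M : ℝ)) ^ k := by
    intro k
    have h1 : ∀ S ∈ Finset.powersetCard k s, ∏ m ∈ S, a m ≤ (ε * H) ^ k := by
      intro S hS
      obtain ⟨hsub, hcardS⟩ := Finset.mem_powersetCard.1 hS
      calc ∏ m ∈ S, a m ≤ ∏ _m ∈ S, (ε * H) :=
            Finset.prod_le_prod (fun m hm => ha0 m (hsub hm)) (fun m hm => haH m (hsub hm))
        _ = (ε * H) ^ k := by rw [Finset.prod_const, hcardS]
    calc E k ≤ ∑ _S ∈ Finset.powersetCard k s, (ε * H) ^ k := Finset.sum_le_sum h1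
      _ = ((Finset.powersetCard k s).card : ℝ) * (ε * H) ^ k := by
          rw [Finset.sum_const, nsmul_eq_mul]
      _ = (M.choose k : ℝ) * (ε * H) ^ k := by rw [Finset.card_powersetCard, hcard]
      _ ≤ (M : ℝ) ^ k * (ε * H) ^ k := by
          have hc : (M.choose k : ℝ) ≤ (M : ℝ) ^ k := by
            exact_mod_cast Nat.choose_le_pow M k
          exact mul_le_mul_of_nonneg_right hc (pow_nonneg (mul_nonneg hε hH) k)
      _ = (ε * H * (M : ℝ)) ^ k := by ring
  -- inclusion–exclusion expansion
  have hexp : ∏ m ∈ s, (1 - a m)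
      = ∑ k ∈ Finset.range (M + 1), (-1 : ℝ) ^ k * E k := by
    calc ∏ m ∈ s, (1 - a m) = ∏ m ∈ s, ((-1) * a m + 1) := by
          exact Finset.prod_congr rfl fun m _ => by ring
      _ = ∑ t ∈ s.powerset, (∏ m ∈ t, (-1) * a m) * ∏ _m ∈ s \ t, (1 : ℝ) :=
          Finset.prod_add _ _ s
      _ = ∑ t ∈ s.powerset, (-1 : ℝ) ^ t.card * ∏ m ∈ t, a m := by
          refine Finset.sum_congr rfl fun t _ => ?_
          rw [Finset.prod_const_one, mul_one, Finset.prod_mul_distrib, Finset.prod_const]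
      _ = ∑ k ∈ Finset.range (s.card + 1), ∑ t ∈ Finset.powersetCard k s,
            (-1 : ℝ) ^ t.card * ∏ m ∈ t, a m := Finset.sum_powerset s _
      _ = ∑ k ∈ Finset.range (M + 1), (-1 : ℝ) ^ k * E k := by
          rw [hcard]
          refine Finset.sum_congr rfl fun k _ => ?_
          rw [hEdef, Finset.mul_sum]
          refine Finset.sum_congr rfl fun t ht => ?_
          rw [(Finset.mem_powersetCard.1 ht).2]
  have hE0 : E 0 = 1 := by simp [hEdef]
  have hrange : Finset.range (M + 1) = insert 0 (Finset.Icc 1 M) := by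
    ext k
    simp only [Finset.mem_range, Finset.mem_insert, Finset.mem_Icc]
    omega
  have h0notin : (0 : ℕ) ∉ Finset.Icc 1 M := by simp
  have hmain : 1 - ∏ m ∈ s, (1 - a m)
      = ∑ k ∈ Finset.Icc 1 M, (-1 : ℝ) ^ (k + 1) * E k := by
    rw [hexp, hrange, Finset.sum_insert h0notin, hE0]
    have hc : ∀ k ∈ Finset.Icc 1 M, (-1 : ℝ) ^ (k + 1) * E k = -((-1) ^ k * E k) :=
      fun k _ => by ring
    rw [Finset.sum_congr rfl hc, Finset.sum_neg_distrib]
    ring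
  -- split by parity
  have hsplit : ∑ k ∈ Finset.Icc 1 M, (-1 : ℝ) ^ (k + 1) * E k
      = (∑ k ∈ (Finset.Icc 1 M).filter (fun k => Odd k), (-1 : ℝ) ^ (k + 1) * E k)
        + ∑ k ∈ (Finset.Icc 1 M).filter (fun k => ¬ Odd k), (-1 : ℝ) ^ (k + 1) * E k :=
    (Finset.sum_filter_add_sum_filter_not _ _ _).symm
  -- odd part ≥ E 1
  have hodd : E 1 ≤ ∑ k ∈ (Finset.Icc 1 M).filter (fun k => Odd k),
      (-1 : ℝ) ^ (k + 1) * E k := by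
    have heq : ∀ k ∈ (Finset.Icc 1 M).filter (fun k => Odd k),
        (-1 : ℝ) ^ (k + 1) * E k = E k := by
      intro k hk
      have hkodd : Odd k := (Finset.mem_filter.1 hk).2
      rw [Even.neg_one_pow (hkodd.add_one), one_mul]
    rw [Finset.sum_congr rfl heq]
    refine Finset.single_le_sum (fun k _ => hEnonneg k) ?_
    simp only [Finset.mem_filter, Finset.mem_Icc]
    exact ⟨⟨le_refl 1, hM⟩, odd_one⟩
  -- even part
  have heven : ∑ k ∈ (Finset.Icc 1 M).filter (fun k => ¬ Odd k),
      (-1 : ℝ) ^ (k + 1) * E k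
      = - ∑ m' ∈ Finset.Icc 1 (M / 2), E (2 * m') := by
    rw [← Finset.sum_neg_distrib]
    refine Finset.sum_nbij' (fun k => k / 2) (fun m' => 2 * m') ?_ ?_ ?_ ?_ ?_
    · intro k hk
      simp only [Finset.mem_filter, Finset.mem_Icc, Nat.not_odd_iff_even] at hk
      obtain ⟨⟨h1, h2⟩, he⟩ := hk
      obtain ⟨j, hj⟩ := he
      simp only [Finset.mem_Icc]
      omega
    · intro m' hm'
      simp only [Finset.mem_Icc] at hm'
      simp only [Finset.mem_filter, Finset.mem_Icc, Nat.not_odd_iff_even]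
      refine ⟨⟨by omega, ?_⟩, even_two_mul m'⟩
      omega
    · intro k hk
      simp only [Finset.mem_filter, Nat.not_odd_iff_even] at hk
      obtain ⟨j, hj⟩ := hk.2
      omega
    · intro m' _
      omega
    · intro k hk
      simp only [Finset.mem_filter, Nat.not_odd_iff_even] at hk
      obtain ⟨j, hj⟩ := hk.2
      have hke : 2 * (k / 2) = k := by omega
      have : Odd (k + 1) := by
        exact Even.add_one hk.2
      rw [Odd.neg_one_pow this, hke]
      ring
  have hevenle : ∑ m' ∈ Finset.Icc 1 (M / 2), E (2 * m')
      ≤ ∑ m' ∈ Finset.Icc 1 (M / 2), (ε * H * (M : ℝ)) ^ (2 * m') :=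
    Finset.sum_le_sum fun m' _ => hEbound (2 * m')
  -- E 1 = ε * ∑ v
  have hE1 : E 1 = ε * ∑ m ∈ s, v m := by
    rw [hEdef]
    simp only [Finset.powersetCard_one, Finset.sum_map, Function.Embedding.coeFn_mk,
      Finset.prod_singleton]
    rw [ha, ← Finset.mul_sum]
  rw [ge_iff_le]
  have := hEnonneg 1
  calc ε * ∑ m ∈ Finset.Icc 1 M, v m
        - ∑ m' ∈ Finset.Icc 1 (M / 2), (ε * H * (M : ℝ)) ^ (2 * m')
      ≤ E 1 - ∑ m' ∈ Finset.Icc 1 (M / 2), E (2 * m') := by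
        rw [hE1]; exact sub_le_sub_left hevenle _
    _ ≤ 1 - ∏ m ∈ Finset.Icc 1 M, (1 - ε * v m) := by
        rw [show (∏ m ∈ Finset.Icc 1 M, (1 - ε * v m)) = ∏ m ∈ s, (1 - a m) from rfl,
          hmain, hsplit, heven]
        have := hodd
        linarith
end

section
/- Let M ≥ 1 be a natural number and let v_1, …, v_M be real numbers with v_m ≥ 1 for every m. Let H = max_{1 ≤ m ≤ M} v_m and set ε = 1/(H²·M³). Then 1 − ∏_{m=1}^{M} (1 − ε·v_m) > ε · ((∑_{m=1}^{M} v_m) − 1). -/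
/-- Weierstrass-type upper bound on the product. -/
lemma prod_one_sub_le (s : Finset ℕ) (x : ℕ → ℝ)
    (h0 : ∀ i ∈ s, 0 ≤ x i) (h1 : ∀ i ∈ s, x i ≤ 1) :
    ∏ i ∈ s, (1 - x i) ≤ 1 - (∑ i ∈ s, x i) + (∑ i ∈ s, x i) ^ 2 / 2 := by
  induction s using Finset.induction with
  | empty => simp
  | @insert a s ha ih =>
    simp only [Finset.prod_insert ha, Finset.sum_insert ha]
    have h0' : ∀ i ∈ s, 0 ≤ x i := fun i hi => h0 i (Finset.mem_insert_of_mem hi)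
    have h1' : ∀ i ∈ s, x i ≤ 1 := fun i hi => h1 i (Finset.mem_insert_of_mem hi)
    have IH := ih h0' h1'
    have ha0 : 0 ≤ x a := h0 a (Finset.mem_insert_self a s)
    have ha1 : x a ≤ 1 := h1 a (Finset.mem_insert_self a s)
    have hS : 0 ≤ ∑ i ∈ s, x i := Finset.sum_nonneg h0'
    set S := ∑ i ∈ s, x i
    have hmul : (1 - x a) * ∏ i ∈ s, (1 - x i) ≤ (1 - x a) * (1 - S + S ^ 2 / 2) :=
      mul_le_mul_of_nonneg_left IH (by linarith)
    nlinarith [sq_nonneg S, sq_nonneg (x a), mul_nonneg ha0 (sq_nonneg S)]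

/-- Central strict lower bound: with `H = max_m v_m` and `ε = 1/(H² M³)`,
`1 - ∏ (1 - ε v_m) > ε ((∑ v_m) - 1)`. -/
theorem central_lower_bound (M : ℕ) (hM : 1 ≤ M) (v : ℕ → ℝ)
    (hv : ∀ m ∈ Finset.Icc 1 M, 1 ≤ v m) :
    1 - ∏ m ∈ Finset.Icc 1 M,
        (1 - (1 / (((Finset.Icc 1 M).sup' (Finset.nonempty_Icc.mpr hM) v) ^ 2 * (M : ℝ) ^ 3)) * v m) >
      (1 / (((Finset.Icc 1 M).sup' (Finset.nonempty_Icc.mpr hM) v) ^ 2 * (M : ℝ) ^ 3)) *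
        ((∑ m ∈ Finset.Icc 1 M, v m) - 1) := by
  set s := Finset.Icc 1 M with hs
  set H := s.sup' (Finset.nonempty_Icc.mpr hM) v with hH
  have h1s : 1 ∈ s := by simp [hs]; omega
  have hH1 : (1 : ℝ) ≤ H := le_trans (hv 1 h1s) (Finset.le_sup' v h1s)
  have hM1 : (1 : ℝ) ≤ (M : ℝ) := by exact_mod_cast hM
  have hHM : (0 : ℝ) < H ^ 2 * (M : ℝ) ^ 3 := by positivity
  set ε := 1 / (H ^ 2 * (M : ℝ) ^ 3) with hε
  have hε0 : 0 < ε := by positivity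
  have hvH : ∀ m ∈ s, v m ≤ H := fun m hm => Finset.le_sup' v hm
  have hεv1 : ∀ m ∈ s, ε * v m ≤ 1 := by
    intro m hm
    have h1 : v m ≤ H := hvH m hm
    have hM3 : (1:ℝ) ≤ (M : ℝ) ^ 3 := by nlinarith [mul_le_mul hM1 hM1 zero_le_one (by linarith : (0:ℝ) ≤ (M:ℝ))]
    have e1 : H ^ 2 * 1 ≤ H ^ 2 * (M : ℝ) ^ 3 :=
      mul_le_mul_of_nonneg_left hM3 (sq_nonneg H)
    have e2 : H ≤ H ^ 2 := by nlinarith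
    rw [hε, div_mul_eq_mul_div, div_le_one hHM]
    linarith
  have hεv0 : ∀ m ∈ s, 0 ≤ ε * v m := fun m hm =>
    mul_nonneg hε0.le (le_trans zero_le_one (hv m hm))
  have key := prod_one_sub_le s (fun m => ε * v m) hεv0 hεv1
  have hsum : (∑ m ∈ s, ε * v m) = ε * ∑ m ∈ s, v m := by rw [Finset.mul_sum]
  rw [hsum] at key
  set Sv := ∑ m ∈ s, v m with hSv
  have hSvle : Sv ≤ (M : ℝ) * H := by
    rw [hSv]
    calc ∑ m ∈ s, v m ≤ ∑ m ∈ s, H := Finset.sum_le_sum hvH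
    _ = (M : ℝ) * H := by
        rw [Finset.sum_const, hs, Nat.card_Icc]; simp [nsmul_eq_mul]
  have hSv0 : 0 ≤ Sv := Finset.sum_nonneg fun m hm => le_trans zero_le_one (hv m hm)
  -- need (ε * Sv)^2 / 2 < ε, i.e. ε * Sv^2 < 2
  have hkey2 : ε * Sv ^ 2 < 2 := by
    have h1 : Sv ^ 2 ≤ (M : ℝ) ^ 2 * H ^ 2 := by nlinarith
    have h2 : ε * Sv ^ 2 ≤ ε * ((M : ℝ) ^ 2 * H ^ 2) :=
      mul_le_mul_of_nonneg_left h1 hε0.le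
    have h3 : ε * ((M : ℝ) ^ 2 * H ^ 2) = 1 / M := by
      rw [hε]; field_simp
    rw [h3] at h2
    have : 1 / (M : ℝ) ≤ 1 := by
      rw [div_le_one (by linarith)]; linarith
    linarith
  have hfinal : (ε * Sv) ^ 2 / 2 < ε := by
    have : (ε * Sv) ^ 2 = ε * (ε * Sv ^ 2) := by ring
    rw [this]
    nlinarith
  linarith
end

section
/- Let v : ι → ℝ be a family of real numbers indexed by a type ι, let A and B be finite subsets of ι with A nonempty, and let H be a real number such that 1 ≤ v_i ≤ H for every i ∈ A ∪ B. Let ε be a real number with 0 < ε ≤ 1/(H²·|A|³), and suppose ∑_{i ∈ A} v_i ≥ 1 + ∑_{i ∈ B} v_i. Then 1 − ∏_{i ∈ A} (1 − ε·v_i) > 1 − ∏_{i ∈ B} (1 − ε·v_i); equivalently, ∏_{i ∈ A} (1 − ε·v_i) < ∏_{i ∈ B} (1 − ε·v_i). -/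
/-- Weierstrass-type lower bound. -/
lemma aux_one_sub_sum_le_prod {ι : Type*} (s : Finset ι) (x : ι → ℝ)
    (h0 : ∀ i ∈ s, 0 ≤ x i) (h1 : ∀ i ∈ s, x i ≤ 1) :
    1 - ∑ i ∈ s, x i ≤ ∏ i ∈ s, (1 - x i) := by
  classical
  induction s using Finset.induction_on with
  | empty => simp
  | @insert a t ha ih =>
    simp only [Finset.sum_insert ha, Finset.prod_insert ha]
    have h0' : ∀ i ∈ t, 0 ≤ x i := fun i hi => h0 i (Finset.mem_insert_of_mem hi)
    have h1' : ∀ i ∈ t, x i ≤ 1 := fun i hi => h1 i (Finset.mem_insert_of_mem hi)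
    have ih' := ih h0' h1'
    have hxa0 : 0 ≤ x a := h0 a (Finset.mem_insert_self a t)
    have hxa1 : x a ≤ 1 := h1 a (Finset.mem_insert_self a t)
    have hs0 : 0 ≤ ∑ i ∈ t, x i := Finset.sum_nonneg h0'
    nlinarith [mul_le_mul_of_nonneg_left ih' (sub_nonneg.mpr hxa1)]

/-- Second-order upper bound. -/
lemma aux_prod_le {ι : Type*} (s : Finset ι) (x : ι → ℝ)
    (h0 : ∀ i ∈ s, 0 ≤ x i) (h1 : ∀ i ∈ s, x i ≤ 1) :
    ∏ i ∈ s, (1 - x i) ≤ 1 - ∑ i ∈ s, x i + (∑ i ∈ s, x i) ^ 2 / 2 := by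
  classical
  induction s using Finset.induction_on with
  | empty => simp
  | @insert a t ha ih =>
    simp only [Finset.sum_insert ha, Finset.prod_insert ha]
    have h0' : ∀ i ∈ t, 0 ≤ x i := fun i hi => h0 i (Finset.mem_insert_of_mem hi)
    have h1' : ∀ i ∈ t, x i ≤ 1 := fun i hi => h1 i (Finset.mem_insert_of_mem hi)
    have ih' := ih h0' h1'
    have hxa0 : 0 ≤ x a := h0 a (Finset.mem_insert_self a t)
    have hxa1 : x a ≤ 1 := h1 a (Finset.mem_insert_self a t)
    have hs0 : 0 ≤ ∑ i ∈ t, x i := Finset.sum_nonneg h0'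
    nlinarith [mul_le_mul_of_nonneg_left ih' (sub_nonneg.mpr hxa1), sq_nonneg (x a)]

/-- Separation argument: if `∑_{i∈A} v_i ≥ 1 + ∑_{i∈B} v_i` with values in `[1,H]`
and `0 < ε ≤ 1/(H² |A|³)`, then
`1 - ∏_{i∈A}(1 - ε v_i) > 1 - ∏_{i∈B}(1 - ε v_i)`, equivalently
`∏_{i∈A}(1 - ε v_i) < ∏_{i∈B}(1 - ε v_i)`. -/
theorem separation_argument {ι : Type*} [DecidableEq ι] (v : ι → ℝ) (A B : Finset ι)
    (hA : A.Nonempty) (H : ℝ)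
    (hv : ∀ i ∈ A ∪ B, 1 ≤ v i ∧ v i ≤ H) (ε : ℝ)
    (hε0 : 0 < ε) (hε : ε ≤ 1 / (H ^ 2 * (A.card : ℝ) ^ 3))
    (hsum : ∑ i ∈ A, v i ≥ 1 + ∑ i ∈ B, v i) :
    (1 - ∏ i ∈ A, (1 - ε * v i) > 1 - ∏ i ∈ B, (1 - ε * v i)) ∧
      ∏ i ∈ A, (1 - ε * v i) < ∏ i ∈ B, (1 - ε * v i) := by
  obtain ⟨a0, ha0⟩ := hA
  have hH1 : 1 ≤ H := le_trans (hv a0 (Finset.mem_union_left _ ha0)).1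
    (hv a0 (Finset.mem_union_left _ ha0)).2
  have hn1 : (1 : ℝ) ≤ (A.card : ℝ) := by
    exact_mod_cast Finset.card_pos.mpr ⟨a0, ha0⟩
  have hdpos : 0 < H ^ 2 * (A.card : ℝ) ^ 3 := by positivity
  -- ε * v i ∈ [0,1] for i ∈ A ∪ B
  have h1 : ε * (H ^ 2 * (A.card : ℝ) ^ 3) ≤ 1 := (le_div_iff₀ hdpos).mp hε
  have hn3 : 1 ≤ (A.card : ℝ) ^ 3 := one_le_pow₀ hn1
  have hεH : ε * H ≤ 1 := by
    nlinarith [mul_le_mul_of_nonneg_left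
      (show H ≤ H ^ 2 * (A.card : ℝ) ^ 3 by nlinarith [hn3]) hε0.le]
  have hx : ∀ i ∈ A ∪ B, 0 ≤ ε * v i ∧ ε * v i ≤ 1 := by
    intro i hi
    obtain ⟨h1, h2⟩ := hv i hi
    constructor
    · positivity
    · calc ε * v i ≤ ε * H := by nlinarith
        _ ≤ 1 := hεH
  have hxA0 : ∀ i ∈ A, 0 ≤ ε * v i := fun i hi => (hx i (Finset.mem_union_left _ hi)).1
  have hxA1 : ∀ i ∈ A, ε * v i ≤ 1 := fun i hi => (hx i (Finset.mem_union_left _ hi)).2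
  have hxB0 : ∀ i ∈ B, 0 ≤ ε * v i := fun i hi => (hx i (Finset.mem_union_right _ hi)).1
  have hxB1 : ∀ i ∈ B, ε * v i ≤ 1 := fun i hi => (hx i (Finset.mem_union_right _ hi)).2
  set SA := ∑ i ∈ A, v i with hSA
  set SB := ∑ i ∈ B, v i with hSB
  have hsumA : ∑ i ∈ A, ε * v i = ε * SA := by rw [hSA, Finset.mul_sum]
  have hsumB : ∑ i ∈ B, ε * v i = ε * SB := by rw [hSB, Finset.mul_sum]
  have hSB0 : 0 ≤ SB := Finset.sum_nonneg fun i hi =>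
    le_trans zero_le_one (hv i (Finset.mem_union_right _ hi)).1
  have hSAub : SA ≤ H * (A.card : ℝ) := by
    rw [hSA]
    calc ∑ i ∈ A, v i ≤ ∑ _i ∈ A, H :=
          Finset.sum_le_sum fun i hi => (hv i (Finset.mem_union_left _ hi)).2
      _ = H * (A.card : ℝ) := by rw [Finset.sum_const]; ring
  have hSA1 : 1 ≤ SA := le_trans (by linarith) hsum
  -- key quadratic bound: (ε*SA)^2 ≤ ε
  have hkey : (ε * SA) ^ 2 ≤ ε := by
    have h2 : ε * SA ≤ ε * (H * (A.card : ℝ)) := by nlinarith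
    have h3 : (ε * SA) ^ 2 ≤ (ε * (H * (A.card : ℝ))) ^ 2 := by
      apply sq_le_sq'
      · nlinarith
      · exact h2
    have h4 : ε * (H ^ 2 * (A.card : ℝ) ^ 2) ≤ 1 := by
      nlinarith [mul_le_mul_of_nonneg_left
        (show H ^ 2 * (A.card : ℝ) ^ 2 ≤ H ^ 2 * (A.card : ℝ) ^ 3 by nlinarith [sq_nonneg H, sq_nonneg ((A.card:ℝ))]) hε0.le]
    nlinarith [mul_le_mul_of_nonneg_left h4 hε0.le]
  have hupper : ∏ i ∈ A, (1 - ε * v i) ≤ 1 - ε * SA + (ε * SA) ^ 2 / 2 := by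
    have := aux_prod_le A (fun i => ε * v i) hxA0 hxA1
    rwa [hsumA] at this
  have hlower : 1 - ε * SB ≤ ∏ i ∈ B, (1 - ε * v i) := by
    have := aux_one_sub_sum_le_prod B (fun i => ε * v i) hxB0 hxB1
    rwa [hsumB] at this
  have hmain : ∏ i ∈ A, (1 - ε * v i) < ∏ i ∈ B, (1 - ε * v i) := by
    have hgap : ε ≤ ε * SA - ε * SB := by nlinarith
    nlinarith
  exact ⟨by linarith, hmain⟩
end
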